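/- arXiv:2112.06612 — 3 statements merged into one kernel-verified Lean document; each statement's English description precedes it below -/
import Mathlib

section
/- Let 1 → N → G → Q → 1 be a short exact sequence of groups (i.e., N is a normal subgroup of G with quotient Q). If Q is finite and N has infinitely many conjugacy classes, then G also has infinitely many conjugacy classes. -/
/-- If `1 → N → G → Q → 1` is a short exact sequence of groups (i.e. `N` is a normal
subgroup of `G` and `Q` is isomorphic to the quotient `G ⧸ N`), `Q` is finite and `N`
has infinitely many conjugacy classes, then `G` has infinitely many conjugacy classes. -/
theorem infinite_conjClasses_of_finite_quotient {G Q : Type*} [Group G] [Group Q]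
    [Finite Q] (N : Subgroup G) [N.Normal] (e : G ⧸ N ≃* Q)
    (hN : Infinite (ConjClasses N)) : Infinite (ConjClasses G) := by
  classical
  by_contra h
  rw [not_infinite_iff_finite] at h
  haveI hQ : Finite (G ⧸ N) := Finite.of_equiv Q e.symm.toEquiv
  have hNorm : N.Normal := inferInstance
  -- key: if g and g' have the same coset, conjugates of n by g and g' are N-conjugate
  have key : ∀ (n : G) (hn : n ∈ N) (g g' : G), (g : G ⧸ N) = (g' : G ⧸ N) →
      ConjClasses.mk (⟨g * n * g⁻¹, hNorm.conj_mem n hn g⟩ : N)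
        = ConjClasses.mk (⟨g' * n * g'⁻¹, hNorm.conj_mem n hn g'⟩ : N) := by
    intro n hn g g' hgg'
    rw [QuotientGroup.eq] at hgg'
    have hk : g' * g⁻¹ ∈ N := by
      have := hNorm.mem_comm hgg'
      simpa [mul_assoc] using this
    rw [ConjClasses.mk_eq_mk_iff_isConj, isConj_iff]
    refine ⟨⟨g' * g⁻¹, hk⟩, ?_⟩
    ext
    simp only [Subgroup.coe_mul, InvMemClass.coe_inv]
    group
  set f : ConjClasses N → ConjClasses G := ConjClasses.map N.subtype with hf
  have hfmk : ∀ n : N, f (ConjClasses.mk n) = ConjClasses.mk (n : G) := fun n => rfl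
  let r : ConjClasses G → N := fun c =>
    if h : ∃ m : N, ConjClasses.mk (m : G) = c then h.choose else 1
  have hr : ∀ d : ConjClasses N, ConjClasses.mk ((r (f d) : N) : G) = f d := by
    intro d
    obtain ⟨n, rfl⟩ := d.exists_rep
    have hex : ∃ m : N, ConjClasses.mk (m : G) = f (ConjClasses.mk n) := ⟨n, rfl⟩
    simp only [r, dif_pos hex]
    exact hex.choose_spec
  have hg : ∀ d : ConjClasses N, ∃ g : G,
      ConjClasses.mk (⟨g * ((r (f d) : N) : G) * g⁻¹,
        hNorm.conj_mem _ (r (f d)).2 g⟩ : N) = d := by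
    intro d
    have h1 := hr d
    obtain ⟨n, rfl⟩ := d.exists_rep
    rw [hfmk, ConjClasses.mk_eq_mk_iff_isConj, isConj_iff] at h1
    obtain ⟨g, hgeq⟩ := h1
    refine ⟨g, ?_⟩
    congr 1
    exact Subtype.ext hgeq
  choose g hg' using hg
  have hi : Function.Injective (fun d : ConjClasses N => (f d, ((g d : G) : G ⧸ N))) := by
    intro d d' hdd'
    have h1 : f d = f d' := congrArg Prod.fst hdd'
    have h2 : ((g d : G) : G ⧸ N) = (g d' : G) := congrArg Prod.snd hdd'
    have k := key ((r (f d) : N) : G) (r (f d)).2 (g d) (g d') h2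
    rw [hg' d] at k
    rw [h1] at k
    rw [hg' d'] at k
    exact k
  haveI : Finite (ConjClasses N) := Finite.of_injective _ hi
  exact absurd this (by exact fun _ => not_finite (ConjClasses N))
end

section
/- If a group G has the S∞-property, then G has the R∞-property. -/
/-- `x` and `y` are `φ`-twisted conjugate. -/
def TwistedConj {G : Type*} [Group G] (φ : G ≃* G) (x y : G) : Prop :=
  ∃ g : G, y = g * x * (φ g)⁻¹

/-- The `φ`-twisted conjugacy (Reidemeister) classes of `φ`. -/
def TwistedConjClasses {G : Type*} [Group G] (φ : G ≃* G) : Type _ :=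
  Quot (TwistedConj φ)

/-- A group `G` has the `R∞`-property if for every automorphism `φ` of `G` the number
`R(φ)` of `φ`-twisted conjugacy classes is infinite. -/
def HasRinftyProperty (G : Type*) [Group G] : Prop :=
  ∀ φ : G ≃* G, Infinite (TwistedConjClasses φ)

/-- Two automorphisms `α` and `β` are isogredient if `β = i_h ∘ α ∘ i_{h⁻¹}` for some
`h ∈ G`, where `i_h (x) = h x h⁻¹`. -/
def Isogredient {G : Type*} [Group G] (α β : MulAut G) : Prop :=
  ∃ h : G, β = MulAut.conj h * α * MulAut.conj h⁻¹

/-- The coset `Φ = Inn(G)·φ` of `Inn(G)` in `Aut(G)` containing `φ`. -/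
def InnCoset {G : Type*} [Group G] (φ : MulAut G) : Type _ :=
  {ψ : MulAut G // ∃ g : G, ψ = MulAut.conj g * φ}

/-- The isogredience classes of the coset `Φ = Inn(G)·φ`. -/
def IsogredienceClasses {G : Type*} [Group G] (φ : MulAut G) : Type _ :=
  Quot (fun α β : InnCoset φ => Isogredient α.1 β.1)

/-- A group `G` has the `S∞`-property if every coset `Φ ∈ Out(G) = Aut(G)/Inn(G)` has
infinitely many isogredience classes. -/
def HasSinftyProperty (G : Type*) [Group G] : Prop :=
  ∀ φ : MulAut G, Infinite (IsogredienceClasses φ)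

/-- If `y = k * x * φ(k)⁻¹`, then `conj y * φ` is isogredient to `conj x * φ`. -/
lemma isogredient_of_twistedConj {G : Type*} [Group G] (φ : MulAut G) {x y : G}
    (hxy : TwistedConj (φ : G ≃* G) x y) :
    Isogredient (MulAut.conj x * φ) (MulAut.conj y * φ) := by
  obtain ⟨k, rfl⟩ := hxy
  refine ⟨k, ?_⟩
  ext z
  simp [MulAut.conj, mul_assoc]

/-- If a group `G` has the `S∞`-property, then `G` has the `R∞`-property. -/
theorem hasRinftyProperty_of_hasSinftyProperty {G : Type*} [Group G]
    (h : HasSinftyProperty G) : HasRinftyProperty G := by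
  intro φ
  haveI : Infinite (IsogredienceClasses φ) := h φ
  let f : TwistedConjClasses φ → IsogredienceClasses φ :=
    Quot.lift (fun x => Quot.mk _ ⟨MulAut.conj x * φ, x, rfl⟩)
      (fun x y hxy => Quot.sound (isogredient_of_twistedConj φ hxy))
  have hf : Function.Surjective f := by
    intro q
    induction q using Quot.ind with
    | _ ψ =>
      obtain ⟨ψ, g, hg⟩ := ψ
      exact ⟨Quot.mk _ g, congrArg (Quot.mk _) (Subtype.ext hg.symm)⟩
  exact Infinite.of_surjective f hf
end

section
/- Let G be a group with trivial center, Z(G) = {1}. If G has the R∞-property, then G has the S∞-property. -/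

private lemma myConj_injective {G : Type*} [Group G] (hZ : Subgroup.center G = ⊥) :
    Function.Injective (MulAut.conj (G := G)) := by
  intro x y hxy
  have hmem : y⁻¹ * x ∈ Subgroup.center G := by
    rw [Subgroup.mem_center_iff]
    intro g
    have h0 : x * g * x⁻¹ = y * g * y⁻¹ := by
      have := congrArg (fun ψ : MulAut G => ψ g) hxy
      simpa using this
    have : y⁻¹ * (x * g * x⁻¹) * y = g := by rw [h0]; group
    calc g * (y⁻¹ * x) = y⁻¹ * (x * g * x⁻¹) * y * (y⁻¹ * x) := by rw [this]
      _ = y⁻¹ * x * g := by group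
  rw [hZ, Subgroup.mem_bot] at hmem
  have : x = y * (y⁻¹ * x) := by group
  rw [hmem, mul_one] at this
  exact this

private lemma conj_sandwich {G : Type*} [Group G] (φ : MulAut G) (k x : G) :
    MulAut.conj k * (MulAut.conj x * φ) * MulAut.conj k⁻¹
      = MulAut.conj (k * x * (φ k)⁻¹) * φ := by
  ext g
  simp [mul_assoc, map_mul, map_inv]

private lemma isog_equiv {G : Type*} [Group G] (φ : MulAut G) :
    Equivalence (fun α β : InnCoset φ => Isogredient α.1 β.1) := by
  constructor
  · intro α; exact ⟨1, by simp⟩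
  · rintro α β ⟨h, hh⟩
    refine ⟨h⁻¹, ?_⟩
    rw [hh]
    simp [← mul_assoc, ← map_mul]
  · rintro α β γ ⟨h, hh⟩ ⟨k, hk⟩
    refine ⟨k * h, ?_⟩
    rw [hk, hh, map_mul, mul_inv_rev, map_mul]
    group

/-- If `G` has trivial center and the `R∞`-property, then `G` has the `S∞`-property. -/
theorem hasSinftyProperty_of_hasRinftyProperty_of_centerless {G : Type*} [Group G]
    (hZ : Subgroup.center G = ⊥) (h : HasRinftyProperty G) : HasSinftyProperty G := by
  intro φ
  have hInf : Infinite (TwistedConjClasses (φ : G ≃* G)) := h φ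
  let el : G → InnCoset φ := fun x => ⟨MulAut.conj x * φ, ⟨x, rfl⟩⟩
  have key : ∀ x y : G, Isogredient (el x).1 (el y).1 → TwistedConj (φ : G ≃* G) x y := by
    rintro x y ⟨k, hk⟩
    simp only [el] at hk
    rw [conj_sandwich] at hk
    have h2 : MulAut.conj y = MulAut.conj (k * x * (φ k)⁻¹) := mul_right_cancel hk
    exact ⟨k, myConj_injective hZ h2⟩
  let F : TwistedConjClasses (φ : G ≃* G) → IsogredienceClasses φ :=
    Quot.lift (fun x => Quot.mk _ (el x)) (by
      rintro x y ⟨g, rfl⟩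
      apply Quot.sound
      exact ⟨g, (conj_sandwich φ g x).symm⟩)
  have hFinj : Function.Injective F := by
    intro a b
    induction a using Quot.ind with | _ x =>
    induction b using Quot.ind with | _ y =>
    intro hab
    have hgen := Quot.eqvGen_exact hab
    exact Quot.sound (key x y ((Equivalence.eqvGen_iff (isog_equiv φ)).mp hgen))
  exact Infinite.of_injective F hFinj
end
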